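/- Single-item optimality when a_⊥ dominates: Suppose u(a_⊥) = 1 and w(a) < w(a_⊥) for every regular item a. Then for any regular items a, a', the cascading value satisfies f((a, a', a_⊥), u, w) ≤ f((a, a_⊥), u, w); consequently, among all nonempty lists of regular items followed by a_⊥, some single-item list (a*, a_⊥) with a* maximizing u(a)·w(a) + (1−u(a))·w(a_⊥) achieves the maximum of f. -/

import Mathlib

/-! Every regular item is worth less than `a_⊥`, so `f` of any list ending in `a_⊥` is a convex
combination of values at most `w(a_⊥)`. Hence replacing everything after the first item by `a_⊥`
alone cannot decrease `f`, and the best single item beats every list. -/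

/-- The cascading reward function. -/
noncomputable def cascadeF {α : Type*} (u w : α → ℝ) : List α → ℝ
  | [] => 0
  | a :: t => u a * w a + (1 - u a) * cascadeF u w t

section Cascade

variable {α : Type*} {u w : α → ℝ}

@[simp]
theorem cascadeF_cons (a : α) (t : List α) :
    cascadeF u w (a :: t) = u a * w a + (1 - u a) * cascadeF u w t := rfl

theorem cascadeF_singleton_of_eq_one {b : α} (hb : u b = 1) : cascadeF u w [b] = w b := by
  simp [cascadeF, hb]

theorem cascadeF_pair_of_eq_one {b : α} (hb : u b = 1) (a : α) :
    cascadeF u w [a, b] = u a * w a + (1 - u a) * w b := by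
  rw [cascadeF_cons, cascadeF_singleton_of_eq_one hb]

theorem cascadeF_cons_le_cons {a : α} (ha : u a ≤ 1) {t t' : List α}
    (h : cascadeF u w t ≤ cascadeF u w t') : cascadeF u w (a :: t) ≤ cascadeF u w (a :: t') := by
  simp only [cascadeF_cons]
  gcongr

theorem cascadeF_append_le {c : ℝ} {L M : List α} (hu : ∀ a ∈ L, 0 ≤ u a ∧ u a ≤ 1)
    (hw : ∀ a ∈ L, w a ≤ c) (hM : cascadeF u w M ≤ c) : cascadeF u w (L ++ M) ≤ c := by
  induction L with
  | nil => simpa using hM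
  | cons a t ih =>
    obtain ⟨hu0, hu1⟩ := hu a List.mem_cons_self
    have ht : cascadeF u w (t ++ M) ≤ c :=
      ih (fun b hb => hu b (List.mem_cons_of_mem a hb)) (fun b hb => hw b (List.mem_cons_of_mem a hb))
    calc cascadeF u w (a :: t ++ M) = u a * w a + (1 - u a) * cascadeF u w (t ++ M) := rfl
      _ ≤ u a * c + (1 - u a) * c := by
        gcongr
        exact hw a List.mem_cons_self
      _ = c := by ring

end Cascade

theorem single_item_optimal_general {α : Type*} (u w : α → ℝ) (bot : α)
    (N : Finset α) (hN : N.Nonempty)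
    (hu : ∀ a, 0 ≤ u a ∧ u a ≤ 1) (hbot : u bot = 1)
    (hw : ∀ a ∈ N, w a < w bot) :
    (∀ a ∈ N, ∀ a' ∈ N, cascadeF u w [a, a', bot] ≤ cascadeF u w [a, bot]) ∧
    ∃ astar ∈ N,
      (∀ a ∈ N, u a * w a + (1 - u a) * w bot
          ≤ u astar * w astar + (1 - u astar) * w bot) ∧
      ∀ L : List α, L ≠ [] → L.Nodup → (∀ a ∈ L, a ∈ N) →
        cascadeF u w (L ++ [bot]) ≤ cascadeF u w [astar, bot] := by
  have truncate : ∀ a t, (∀ b ∈ t, b ∈ N) → cascadeF u w (a :: t ++ [bot]) ≤ cascadeF u w [a, bot] :=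
    fun a t ht => cascadeF_cons_le_cons (hu a).2 <|
      (cascadeF_append_le (fun b _ => hu b) (fun b hb => (hw b (ht b hb)).le)
        (cascadeF_singleton_of_eq_one hbot).le).trans (cascadeF_singleton_of_eq_one hbot).ge
  refine ⟨fun a _ a' ha' => truncate a [a'] (by simpa using ha'), ?_⟩
  obtain ⟨astar, hastar, hmax⟩ :=
    N.exists_max_image (fun a => u a * w a + (1 - u a) * w bot) hN
  refine ⟨astar, hastar, hmax, fun L hL _ hLN => ?_⟩
  obtain ⟨a, t, rfl⟩ := List.exists_cons_of_ne_nil hL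
  calc cascadeF u w (a :: t ++ [bot])
      ≤ cascadeF u w [a, bot] := truncate a t fun b hb => hLN b (List.mem_cons_of_mem a hb)
    _ ≤ cascadeF u w [astar, bot] := by
      rw [cascadeF_pair_of_eq_one hbot, cascadeF_pair_of_eq_one hbot]
      exact hmax a (hLN a List.mem_cons_self)

/-- Single-item optimality when `a_⊥` dominates: if every regular item has weight
below `w(a_⊥)` (and `u(a_⊥) = 1`), then appending a second item never helps, and a
single item maximizing `u(a)w(a) + (1−u(a))w(a_⊥)` is optimal among all nonempty
lists of distinct regular items followed by `a_⊥`. -/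
theorem single_item_optimal {α : Type*} [DecidableEq α] (u w : α → ℝ) (bot : α)
    (N : Finset α) (hN : N.Nonempty) (hbN : bot ∉ N)
    (hu : ∀ a, 0 ≤ u a ∧ u a ≤ 1) (hbot : u bot = 1)
    (hw : ∀ a ∈ N, w a < w bot) :
    (∀ a ∈ N, ∀ a' ∈ N, cascadeF u w [a, a', bot] ≤ cascadeF u w [a, bot]) ∧
    ∃ astar ∈ N,
      (∀ a ∈ N, u a * w a + (1 - u a) * w bot
          ≤ u astar * w astar + (1 - u astar) * w bot) ∧
      ∀ L : List α, L ≠ [] → L.Nodup → (∀ a ∈ L, a ∈ N) →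
        cascadeF u w (L ++ [bot]) ≤ cascadeF u w [astar, bot] :=
  single_item_optimal_general u w bot N hN hu hbot hw
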